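/- arXiv:2008.05333 — 2 statements merged into one kernel-verified Lean document; each statement's English description precedes it below -/
import Mathlib

section
/- The vector-valued optimal proposal: for f : Z → ℝ^d, the trace of the covariance of the importance-weighted estimator (p₁(z)/p₂(z)) f(z) under proposal p₂ is minimized when p₂(z) ∝ p₁(z)·‖f(z)‖₂. -/
/-- Vector-valued optimal proposal: the proposal `p₂⋆ z ∝ p₁ z ‖f z‖` minimizes
the trace of the covariance of the importance-weighted estimator, i.e. it
minimizes `E_{P₂}[‖(p₁/p₂) f‖²] − ‖E_{P₁}[f]‖²` over valid proposals. -/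
theorem vector_optimal_importance_proposal {Z : Type*} [Fintype Z] {d : ℕ}
    (p₁ : Z → ℝ) (f : Z → EuclideanSpace ℝ (Fin d))
    (h₁nonneg : ∀ z, 0 ≤ p₁ z) (h₁sum : ∑ z, p₁ z = 1)
    (hμ : 0 < ∑ z, p₁ z * ‖f z‖) :
    ∀ p₂ : Z → ℝ, (∀ z, 0 ≤ p₂ z) → (∑ z, p₂ z = 1) →
      (∀ z, p₁ z * ‖f z‖ ≠ 0 → 0 < p₂ z) →
      (∑ z, (p₁ z * ‖f z‖ / ∑ z', p₁ z' * ‖f z'‖) *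
          ‖(p₁ z / (p₁ z * ‖f z‖ / ∑ z', p₁ z' * ‖f z'‖)) • f z‖ ^ 2
        - ‖∑ z, p₁ z • f z‖ ^ 2)
      ≤ ∑ z, p₂ z * ‖(p₁ z / p₂ z) • f z‖ ^ 2 - ‖∑ z, p₁ z • f z‖ ^ 2 := by
  intro p₂ h₂nonneg h₂sum h₂pos
  set S := ∑ z', p₁ z' * ‖f z'‖ with hS
  have hSpos : 0 < S := hμ
  have hLHS : ∑ z, (p₁ z * ‖f z‖ / S) * ‖(p₁ z / (p₁ z * ‖f z‖ / S)) • f z‖ ^ 2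
      = S ^ 2 := by
    have hterm : ∀ z, (p₁ z * ‖f z‖ / S) * ‖(p₁ z / (p₁ z * ‖f z‖ / S)) • f z‖ ^ 2
        = S * (p₁ z * ‖f z‖) := by
      intro z
      by_cases h : p₁ z * ‖f z‖ = 0
      · simp [h]
      · have hp : p₁ z ≠ 0 := fun hc => h (by simp [hc])
        have hf : ‖f z‖ ≠ 0 := fun hc => h (by simp [hc])
        rw [norm_smul, Real.norm_eq_abs, mul_pow, sq_abs]
        field_simp
    rw [Finset.sum_congr rfl (fun z _ => hterm z), ← Finset.mul_sum, ← hS, sq]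
  have key : S ^ 2 ≤ ∑ z, p₂ z * ‖(p₁ z / p₂ z) • f z‖ ^ 2 := by
    have cs := Finset.sum_mul_sq_le_sq_mul_sq Finset.univ
      (fun z => Real.sqrt (p₂ z)) (fun z => p₁ z * ‖f z‖ / Real.sqrt (p₂ z))
    have h1 : ∑ z, Real.sqrt (p₂ z) * (p₁ z * ‖f z‖ / Real.sqrt (p₂ z)) = S := by
      refine Finset.sum_congr rfl fun z _ => ?_
      by_cases h : p₁ z * ‖f z‖ = 0
      · simp [h]
      · have hp : 0 < p₂ z := h₂pos z h
        have hs : Real.sqrt (p₂ z) ≠ 0 := by positivity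
        field_simp
    have h2 : ∑ z, Real.sqrt (p₂ z) ^ 2 = 1 := by
      rw [← h₂sum]
      exact Finset.sum_congr rfl fun z _ => Real.sq_sqrt (h₂nonneg z)
    have h3 : ∑ z, (p₁ z * ‖f z‖ / Real.sqrt (p₂ z)) ^ 2
        = ∑ z, p₂ z * ‖(p₁ z / p₂ z) • f z‖ ^ 2 := by
      refine Finset.sum_congr rfl fun z _ => ?_
      by_cases h : p₂ z = 0
      · simp [h]
      · have hp : 0 < p₂ z := lt_of_le_of_ne (h₂nonneg z) (Ne.symm h)
        rw [norm_smul, Real.norm_eq_abs, mul_pow, sq_abs]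
        have hs : Real.sqrt (p₂ z) ^ 2 = p₂ z := Real.sq_sqrt hp.le
        rw [div_pow, hs]
        field_simp
    rw [h1, h2, h3, one_mul] at cs
    exact cs
  rw [hLHS] at *
  linarith
end

section
/- Variance under optimal proposal never exceeds variance under the original distribution: with p₂*(z) = p₁(z)|f(z)|/Σ p₁|f|, we have Var_{z∼P₂*}[(p₁(z)/p₂*(z)) f(z)] ≤ Var_{z∼P₁}[f(z)], with equality iff |f| is P₁-almost surely constant. -/
/-!
Under the proposal `q ∝ p₁ |f|` the importance-weighted estimator `p₁ f / q` has constant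
modulus `∑ p₁ |f|`, so its second moment is `(∑ p₁ |f|)²`, while its mean is still `∑ p₁ f`.
The claim thus reduces to Jensen's inequality `(∑ p₁ |f|)² ≤ ∑ p₁ f²` for the strictly convex
square, whose equality case is exactly that `|f|` is constant on the support of `p₁`.
-/

open Finset

section Jensen

variable {ι : Type*} [Fintype ι] {w : ι → ℝ}

theorem sq_sum_mul_le_sum_mul_sq (hw₀ : ∀ i, 0 ≤ w i) (hw₁ : ∑ i, w i = 1) (g : ι → ℝ) :
    (∑ i, w i * g i) ^ 2 ≤ ∑ i, w i * g i ^ 2 :=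
  (Even.strictConvexOn_pow even_two two_ne_zero).convexOn.map_sum_le (fun i _ => hw₀ i) hw₁
    (fun i _ => Set.mem_univ (g i))

theorem sq_sum_mul_eq_sum_mul_sq_iff (hw₀ : ∀ i, 0 ≤ w i) (hw₁ : ∑ i, w i = 1) (g : ι → ℝ) :
    (∑ i, w i * g i) ^ 2 = ∑ i, w i * g i ^ 2 ↔ ∃ c, ∀ i, 0 < w i → g i = c := by
  have hpos : ∀ i, w i ≠ 0 ↔ 0 < w i := fun i => (hw₀ i).lt_iff_ne'.symm
  have hjensen := (Even.strictConvexOn_pow even_two two_ne_zero).map_sum_eq_iff_of_nonneg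
    (fun i _ => hw₀ i) hw₁ (fun i _ => Set.mem_univ (g i))
  simp only [smul_eq_mul, mem_univ, true_implies, hpos] at hjensen
  rw [hjensen]
  constructor
  · intro hconst
    obtain ⟨i₀, -, hi₀⟩ := exists_ne_zero_of_sum_ne_zero (hw₁ ▸ one_ne_zero : ∑ i, w i ≠ 0)
    exact ⟨g i₀, fun i hi => hconst hi ((hpos i₀).mp hi₀)⟩
  · rintro ⟨c, hc⟩ j hj k hk
    rw [hc j hj, hc k hk]

end Jensen

section OptimalProposal

theorem optimal_proposal_mul_sq (a b S : ℝ) :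
    a * |b| / S * (a / (a * |b| / S) * b) ^ 2 = S * (a * |b|) := by
  rcases eq_or_ne (a * |b| / S) 0 with hq | hq
  · rw [hq, zero_mul]
    rcases div_eq_zero_iff.mp hq with h | h <;> simp [h]
  · obtain ⟨hab, hS⟩ := div_ne_zero_iff.mp hq
    obtain ⟨ha, hb⟩ := mul_ne_zero_iff.mp hab
    field_simp
    rw [sq_abs]

theorem optimal_proposal_mul {a b S : ℝ} (h : a * |b| / S = 0 → a * |b| = 0) :
    a * |b| / S * (a / (a * |b| / S) * b) = a * b := by
  rcases eq_or_ne (a * |b| / S) 0 with hq | hq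
  · rw [hq, zero_mul, eq_comm]
    simpa only [mul_eq_zero, abs_eq_zero] using h hq
  · rw [← mul_assoc, mul_div_cancel₀ a hq]

variable {Z : Type*} [Fintype Z] (p f : Z → ℝ)

theorem sum_optimal_proposal_mul_sq :
    ∑ z, (p z * |f z| / ∑ z', p z' * |f z'|) *
        (p z / (p z * |f z| / ∑ z', p z' * |f z'|) * f z) ^ 2
      = (∑ z, p z * |f z|) ^ 2 := by
  rw [sum_congr rfl fun z _ => optimal_proposal_mul_sq (p z) (f z) _, ← mul_sum, sq]

theorem sum_optimal_proposal_mul (hp : ∀ z, 0 ≤ p z) :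
    ∑ z, (p z * |f z| / ∑ z', p z' * |f z'|) *
        (p z / (p z * |f z| / ∑ z', p z' * |f z'|) * f z)
      = ∑ z, p z * f z := by
  refine sum_congr rfl fun z _ => optimal_proposal_mul fun hq => ?_
  rcases div_eq_zero_iff.mp hq with h | hS
  · exact h
  · exact (sum_eq_zero_iff_of_nonneg fun z _ => mul_nonneg (hp z) (abs_nonneg (f z))).mp hS z
      (mem_univ z)

end OptimalProposal

theorem optimal_proposal_beats_original_general {Z : Type*} [Fintype Z]
    (p₁ : Z → ℝ) (f : Z → ℝ)
    (h₁nonneg : ∀ z, 0 ≤ p₁ z) (h₁sum : ∑ z, p₁ z = 1) :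
    (∑ z, (p₁ z * |f z| / ∑ z', p₁ z' * |f z'|) *
        (p₁ z / (p₁ z * |f z| / ∑ z', p₁ z' * |f z'|) * f z) ^ 2
      - (∑ z, (p₁ z * |f z| / ∑ z', p₁ z' * |f z'|) *
          (p₁ z / (p₁ z * |f z| / ∑ z', p₁ z' * |f z'|) * f z)) ^ 2
      ≤ ∑ z, p₁ z * f z ^ 2 - (∑ z, p₁ z * f z) ^ 2) ∧
    ((∑ z, (p₁ z * |f z| / ∑ z', p₁ z' * |f z'|) *
        (p₁ z / (p₁ z * |f z| / ∑ z', p₁ z' * |f z'|) * f z) ^ 2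
      - (∑ z, (p₁ z * |f z| / ∑ z', p₁ z' * |f z'|) *
          (p₁ z / (p₁ z * |f z| / ∑ z', p₁ z' * |f z'|) * f z)) ^ 2
      = ∑ z, p₁ z * f z ^ 2 - (∑ z, p₁ z * f z) ^ 2)
      ↔ ∃ c : ℝ, ∀ z, 0 < p₁ z → |f z| = c) := by
  have hsq : ∑ z, p₁ z * f z ^ 2 = ∑ z, p₁ z * |f z| ^ 2 := by simp only [sq_abs]
  rw [sum_optimal_proposal_mul_sq, sum_optimal_proposal_mul p₁ f h₁nonneg, hsq, sub_le_sub_iff_right,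
    sub_left_inj]
  exact ⟨sq_sum_mul_le_sum_mul_sq h₁nonneg h₁sum _, sq_sum_mul_eq_sum_mul_sq_iff h₁nonneg h₁sum _⟩

/-- The variance under the optimal proposal never exceeds the variance under the
original distribution, with equality iff `|f|` is `P₁`-a.s. constant. -/
theorem optimal_proposal_beats_original {Z : Type*} [Fintype Z]
    (p₁ : Z → ℝ) (f : Z → ℝ)
    (h₁nonneg : ∀ z, 0 ≤ p₁ z) (h₁sum : ∑ z, p₁ z = 1)
    (hμ : 0 < ∑ z, p₁ z * |f z|) :
    (∑ z, (p₁ z * |f z| / ∑ z', p₁ z' * |f z'|) *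
        (p₁ z / (p₁ z * |f z| / ∑ z', p₁ z' * |f z'|) * f z) ^ 2
      - (∑ z, (p₁ z * |f z| / ∑ z', p₁ z' * |f z'|) *
          (p₁ z / (p₁ z * |f z| / ∑ z', p₁ z' * |f z'|) * f z)) ^ 2
      ≤ ∑ z, p₁ z * f z ^ 2 - (∑ z, p₁ z * f z) ^ 2) ∧
    ((∑ z, (p₁ z * |f z| / ∑ z', p₁ z' * |f z'|) *
        (p₁ z / (p₁ z * |f z| / ∑ z', p₁ z' * |f z'|) * f z) ^ 2
      - (∑ z, (p₁ z * |f z| / ∑ z', p₁ z' * |f z'|) *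
          (p₁ z / (p₁ z * |f z| / ∑ z', p₁ z' * |f z'|) * f z)) ^ 2
      = ∑ z, p₁ z * f z ^ 2 - (∑ z, p₁ z * f z) ^ 2)
      ↔ ∃ c : ℝ, ∀ z, 0 < p₁ z → |f z| = c) :=
  optimal_proposal_beats_original_general p₁ f h₁nonneg h₁sum
end
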